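/- Let L1, L2, L3 be two-dimensional vector spaces over ℂ and let L12 ⊂ L1 ⊗ L2, L23 ⊂ L2 ⊗ L3, L123 ⊂ L1 ⊗ L2 ⊗ L3 be two-dimensional subspaces with L123 ⊂ (L12 ⊗ L3) ∩ (L1 ⊗ L23). If rank L12 = 2 and rank L23 ≠ 0, then rank L23 = 2 and there exist bases {x1,y1} of L1, {x2,y2} of L2 and {x3,y3} of L3 such that L123 = span{x1 ⊗ x2 ⊗ x3, y1 ⊗ y2 ⊗ y3}. -/

import Mathlib

/-!
A two-dimensional subspace of rank 2 in the tensor product of two planes contains two isotropic,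
i.e. product, vectors with nonzero polar pairing; this forces `L12 = span {x1 ⊗ x2, y1 ⊗ y2}` with
`{x1, y1}` and `{x2, y2}` bases. Every `w ∈ L123 ⊆ L12 ⊗ L3` is then
`x1 ⊗ x2 ⊗ a + y1 ⊗ y2 ⊗ b`, and `w ∈ L1 ⊗ L23` forces `x2 ⊗ a, y2 ⊗ b ∈ L23`. The spaces
`A = {a | x2 ⊗ a ∈ L23}` and `B = {b | y2 ⊗ b ∈ L23}` are proper, since otherwise `L23` would
consist of product vectors and have rank 0; as `dim L123 = 2`, both are lines `ℂ a0`, `ℂ b0` and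
`L123 = span {x1 ⊗ x2 ⊗ a0, y1 ⊗ y2 ⊗ b0}`. The same rank-0 argument makes `a0, b0` independent,
so `x2 ⊗ a0 + y2 ⊗ b0` is not a product vector and `L23 = span {x2 ⊗ a0, y2 ⊗ b0}` has rank 2.
-/

open TensorProduct

/-- The rank of the restriction of a quadratic form `q` on `M` to a submodule `L`,
defined as the rank of the polar (bilinear) form of the restriction. -/
noncomputable def quadRankOn {M : Type*} [AddCommGroup M] [Module ℂ M]
    (q : QuadraticForm ℂ M) (L : Submodule ℂ M) : ℕ :=
  Module.finrank ℂ (LinearMap.range (QuadraticMap.polarBilin (q.comp L.subtype)))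

/-- The subspace `L12 ⊗ L3` of `(L1 ⊗ L2) ⊗ L3`. -/
noncomputable def leftTensorSub {L1 L2 L3 : Type*} [AddCommGroup L1] [Module ℂ L1]
    [AddCommGroup L2] [Module ℂ L2] [AddCommGroup L3] [Module ℂ L3]
    (L12 : Submodule ℂ (L1 ⊗[ℂ] L2)) : Submodule ℂ ((L1 ⊗[ℂ] L2) ⊗[ℂ] L3) :=
  LinearMap.range (TensorProduct.mapIncl L12 (⊤ : Submodule ℂ L3))

/-- The subspace `L1 ⊗ L23` of `(L1 ⊗ L2) ⊗ L3`, transported along the associator. -/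
noncomputable def rightTensorSub {L1 L2 L3 : Type*} [AddCommGroup L1] [Module ℂ L1]
    [AddCommGroup L2] [Module ℂ L2] [AddCommGroup L3] [Module ℂ L3]
    (L23 : Submodule ℂ (L2 ⊗[ℂ] L3)) : Submodule ℂ ((L1 ⊗[ℂ] L2) ⊗[ℂ] L3) :=
  Submodule.map (TensorProduct.assoc ℂ L1 L2 L3).symm.toLinearMap
    (LinearMap.range (TensorProduct.mapIncl (⊤ : Submodule ℂ L1) L23))

open Module Submodule QuadraticMap

section Tensor

variable {K M N : Type*} [Field K] [AddCommGroup M] [Module K M] [AddCommGroup N] [Module K N]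

theorem TensorProduct.mk_injective_of_ne_zero {x : M} (hx : x ≠ 0) :
    Function.Injective (mk K M N x) := by
  obtain ⟨φ, hφ⟩ : ∃ φ : Dual K M, φ x ≠ 0 := by
    by_contra! h
    exact hx ((forall_dual_apply_eq_zero_iff K x).1 h)
  intro n n' h
  have := congrArg ((TensorProduct.lid K N).toLinearMap ∘ₗ φ.rTensor N) h
  simpa [hφ] using this

theorem TensorProduct.flip_mk_injective_of_ne_zero {y : N} (hy : y ≠ 0) :
    Function.Injective ((mk K M N).flip y) := by
  convert (TensorProduct.comm K N M).injective.comp (mk_injective_of_ne_zero (N := M) hy) using 1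
  ext x
  simp

theorem tmul_add_tmul_ne_tmul {ι : Type*} (b : Basis ι K M) {i j : ι} (hij : i ≠ j) {a c : N}
    (hac : LinearIndependent K ![a, c]) (z : M) (w : N) :
    b i ⊗ₜ[K] a + b j ⊗ₜ[K] c ≠ z ⊗ₜ w := by
  classical
  intro h
  have hcoord (k : ι) := congrArg (fun t => equivFinsuppOfBasisLeft b t k) h
  have ha := hcoord i
  have hc := hcoord j
  simp only [map_add, Finsupp.add_apply, equivFinsuppOfBasisLeft_apply_tmul_apply,
    Basis.repr_self, Finsupp.single_apply, hij, hij.symm, if_true, if_false, one_smul,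
    zero_smul, add_zero, zero_add] at ha hc
  obtain ⟨-, hzi⟩ := LinearIndependent.pair_iff.1 hac (b.repr z j) (-b.repr z i)
    (by rw [ha, hc]; module)
  exact hac.ne_zero 0 (by simp [ha, neg_eq_zero.1 hzi])

theorem linearIndependent_left_of_forall_ne_tmul {x y : M} {a c : N}
    (h : ∀ z w, x ⊗ₜ[K] a + y ⊗ₜ[K] c ≠ z ⊗ₜ w) : LinearIndependent K ![x, y] := by
  refine linearIndependent_fin2.2 ⟨fun hy => h x a ?_, fun s hs => h y (s • a + c) ?_⟩
  · simp_all
  · simp only [Matrix.cons_val_one, Matrix.cons_val_zero] at hs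
    rw [← hs, tmul_add, smul_tmul]

theorem linearIndependent_right_of_forall_ne_tmul {x y : M} {a c : N}
    (h : ∀ z w, x ⊗ₜ[K] a + y ⊗ₜ[K] c ≠ z ⊗ₜ w) : LinearIndependent K ![a, c] := by
  refine linearIndependent_fin2.2 ⟨fun hc => h x a ?_, fun s hs => h (s • x + y) c ?_⟩
  · simp_all
  · simp only [Matrix.cons_val_one, Matrix.cons_val_zero] at hs
    rw [← hs, add_tmul, smul_tmul]

theorem equivFinsuppOfBasisLeft_apply_mem {ι : Type*} [DecidableEq ι] (b : Basis ι K M)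
    {P : Submodule K N} {t : M ⊗[K] N} (ht : t ∈ LinearMap.range (mapIncl (⊤ : Submodule K M) P))
    (i : ι) :
    equivFinsuppOfBasisLeft b t i ∈ P := by
  obtain ⟨t, rfl⟩ := ht
  induction t with
  | zero => simp
  | tmul m n => simpa [equivFinsuppOfBasisLeft_apply_tmul_apply] using P.smul_mem _ n.2
  | add x y hx hy => simpa using P.add_mem hx hy

theorem exists_eq_tmul_add_tmul_of_mem_range_mapIncl {u v : M} {t : M ⊗[K] N}
    (ht : t ∈ LinearMap.range (mapIncl (span K {u, v}) (⊤ : Submodule K N))) :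
    ∃ a c : N, t = u ⊗ₜ a + v ⊗ₜ c := by
  obtain ⟨t, rfl⟩ := ht
  induction t with
  | zero => exact ⟨0, 0, by simp⟩
  | tmul m n =>
    obtain ⟨s, s', hm⟩ := mem_span_pair.1 m.2
    exact ⟨s • (n : N), s' • (n : N), by simp [mapIncl, ← hm, add_tmul, smul_tmul]⟩
  | add x y hx hy =>
    obtain ⟨a, c, hx⟩ := hx
    obtain ⟨a', c', hy⟩ := hy
    exact ⟨a + a', c + c', by rw [map_add, hx, hy, tmul_add, tmul_add]; abel⟩

end Tensor

section Dimension

variable {K V P : Type*} [Field K] [AddCommGroup V] [Module K V] [AddCommGroup P] [Module K P]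

theorem exists_basis_fin_two (h : finrank K V = 2) {x y : V} (hxy : LinearIndependent K ![x, y]) :
    ∃ b : Basis (Fin 2) K V, b 0 = x ∧ b 1 = y :=
  ⟨basisOfLinearIndependentOfCardEqFinrank hxy (by simp [h]), by simp, by simp⟩

theorem finrank_span_pair {x y : V} (hxy : LinearIndependent K ![x, y]) :
    finrank K (span K {x, y}) = 2 := by
  rw [← Matrix.range_cons_cons_empty x y ![], finrank_span_eq_card hxy, Fintype.card_fin]

theorem exists_eq_span_pair_of_le_sup {V' : Type*} [AddCommGroup V'] [Module K V']
    [FiniteDimensional K V] [FiniteDimensional K V'] {f : V →ₗ[K] P} {g : V' →ₗ[K] P}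
    {A : Submodule K V} {B : Submodule K V'} {S : Submodule K P}
    (hS : S ≤ A.map f ⊔ B.map g) (hS2 : finrank K S = 2)
    (hA : finrank K A ≤ 1) (hB : finrank K B ≤ 1) :
    ∃ a ∈ A, ∃ c ∈ B, a ≠ 0 ∧ c ≠ 0 ∧ S = span K {f a, g c} := by
  have hsup : finrank K ↥(A.map f ⊔ B.map g) ≤ finrank K A + finrank K B :=
    (finrank_add_le_finrank_add_finrank _ _).trans
      (add_le_add (finrank_map_le f A) (finrank_map_le g B))
  have hle := finrank_mono hS
  have hA1 : finrank K A = 1 := by omega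
  have hB1 : finrank K B = 1 := by omega
  obtain ⟨a, ha, ha0⟩ := exists_mem_ne_zero_of_ne_bot
    (fun h => by rw [h, finrank_bot] at hA1; exact zero_ne_one hA1 : A ≠ ⊥)
  obtain ⟨c, hc, hc0⟩ := exists_mem_ne_zero_of_ne_bot
    (fun h => by rw [h, finrank_bot] at hB1; exact zero_ne_one hB1 : B ≠ ⊥)
  have hspan : A.map f ⊔ B.map g = span K {f a, g c} := by
    rw [eq_span_singleton_of_mem_of_finrank_eq_one hA1 ha ha0,
      eq_span_singleton_of_mem_of_finrank_eq_one hB1 hc hc0, map_span, map_span,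
      Set.image_singleton, Set.image_singleton, span_insert]
  exact ⟨a, ha, c, hc, ha0, hc0, hspan ▸ eq_of_le_of_finrank_le hS (by omega)⟩

end Dimension

section QuadraticForm

variable {K M : Type*} [Field K] [AddCommGroup M] [Module K M] {q : QuadraticForm K M}

theorem polar_ne_zero_iff {u v : M} (hu : q u = 0) (hv : q v = 0) :
    polar q u v ≠ 0 ↔ q (u + v) ≠ 0 := by
  simp [polar, hu, hv]

theorem linearIndependent_of_polar_ne_zero {u v : M} (hu : q u = 0) (hv : q v = 0)
    (huv : polar q u v ≠ 0) : LinearIndependent K ![u, v] := by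
  refine LinearIndependent.pair_iff.2 fun s t hst => ?_
  have hu' := congrArg (polar q · u) hst
  have hv' := congrArg (polar q · v) hst
  simp only [polar_add_left, polar_smul_left, polar_self, hu, hv, polar_comm q v u,
    polar_zero_left, smul_eq_mul, nsmul_eq_mul, mul_zero, add_zero, zero_add] at hu' hv'
  exact ⟨(mul_eq_zero.1 hv').resolve_right huv, (mul_eq_zero.1 hu').resolve_right huv⟩

theorem eq_span_pair_of_polar_ne_zero {L : Submodule K M} (hL : finrank K L = 2) {u v : M}
    (huL : u ∈ L) (hvL : v ∈ L) (hu : q u = 0) (hv : q v = 0) (huv : polar q u v ≠ 0) :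
    L = span K {u, v} := by
  have := Module.finite_of_finrank_eq_succ hL
  refine (eq_of_le_of_finrank_eq ?_ ?_).symm
  · rw [span_le, Set.insert_subset_iff, Set.singleton_subset_iff]
    exact ⟨huL, hvL⟩
  · rw [finrank_span_pair (linearIndependent_of_polar_ne_zero hu hv huv), hL]

theorem exists_isotropic_smul_add [IsAlgClosed K] [NeZero (2 : K)] {e : M} (he : q e ≠ 0)
    (f : M) :
    ∃ t : K, q (t • e + f) = 0 := by
  obtain ⟨s, hs⟩ := IsAlgClosed.exists_eq_mul_self (discrim (q e) (polar q e f) (q f))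
  obtain ⟨t, ht⟩ := exists_quadratic_eq_zero he ⟨s, hs⟩
  refine ⟨t, ?_⟩
  have hpol := polar_smul_left (Q := q) t e f
  rw [polar, QuadraticMap.map_smul, smul_eq_mul] at hpol
  linear_combination hpol + ht

theorem exists_isotropic_mem [IsAlgClosed K] [NeZero (2 : K)] {L : Submodule K M}
    (hL : finrank K L = 2) :
    ∃ u ∈ L, u ≠ 0 ∧ q u = 0 := by
  have := Module.finite_of_finrank_eq_succ hL
  let b := finBasisOfFinrankEq K L hL
  by_cases he : q (b 0) = 0
  · exact ⟨b 0, (b 0).2, by simpa using b.ne_zero 0, he⟩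
  obtain ⟨t, ht⟩ := exists_isotropic_smul_add he (b 1)
  refine ⟨t • b 0 + b 1, L.add_mem (L.smul_mem t (b 0).2) (b 1).2, fun h0 => ?_, ht⟩
  have hind := Fintype.linearIndependent_iff.1 b.linearIndependent ![t, 1]
    (by simpa [Fin.sum_univ_two, ← Subtype.coe_inj] using h0) 1
  simp at hind

end QuadraticForm

section QuadRank

variable {M : Type*} [AddCommGroup M] [Module ℂ M] {q : QuadraticForm ℂ M}

theorem quadRankOn_eq_finrank_iff {L : Submodule ℂ M} [FiniteDimensional ℂ L] :
    quadRankOn q L = finrank ℂ L ↔ ∀ u ∈ L, (∀ w ∈ L, polar q u w = 0) → u = 0 := by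
  set B := polarBilin (q.comp L.subtype)
  have hrank := B.finrank_range_add_finrank_ker
  have hB (u : L) : B u = 0 ↔ ∀ w ∈ L, polar q u w = 0 := by
    simp [B, LinearMap.ext_iff, polar]
  rw [quadRankOn, show finrank ℂ (LinearMap.range B) = finrank ℂ L ↔ LinearMap.ker B = ⊥ by
    rw [← finrank_eq_zero]; omega, LinearMap.ker_eq_bot']
  simp only [hB, Subtype.forall, mk_eq_zero]

theorem quadRankOn_eq_zero_of_le_range {P : Type*} [AddCommGroup P] [Module ℂ P]
    {f : P →ₗ[ℂ] M} (hf : ∀ p, q (f p) = 0) {L : Submodule ℂ M}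
    (hL : L ≤ LinearMap.range f) : quadRankOn q L = 0 := by
  have hq : ∀ v ∈ L, q v = 0 := by
    intro v hv
    obtain ⟨p, rfl⟩ := hL hv
    exact hf p
  have hB : polarBilin (q.comp L.subtype) = 0 := by
    ext x y
    simp [polar, hq _ x.2, hq _ y.2, hq _ (L.add_mem x.2 y.2)]
  rw [quadRankOn, hB, LinearMap.range_zero, finrank_bot]

theorem finrank_comap_lt_of_quadRankOn_ne_zero [FiniteDimensional ℂ M] {P : Type*}
    [AddCommGroup P] [Module ℂ P] {f : P →ₗ[ℂ] M} (hf : Function.Injective f)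
    (hq : ∀ p, q (f p) = 0) {L : Submodule ℂ M} (hL : finrank ℂ L = finrank ℂ P)
    (hr : quadRankOn q L ≠ 0) : finrank ℂ (L.comap f) < finrank ℂ P := by
  have := Module.Finite.of_injective f hf
  refine finrank_lt fun htop => hr (quadRankOn_eq_zero_of_le_range hq ?_)
  have hle : LinearMap.range f ≤ L := by
    rw [LinearMap.range_eq_map, map_le_iff_le_comap, htop]
  rw [eq_of_le_of_finrank_eq hle (by rw [LinearMap.finrank_range_of_inj hf, hL])]

theorem quadRankOn_span_pair {u v : M} (hu : q u = 0) (hv : q v = 0) (huv : polar q u v ≠ 0) :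
    quadRankOn q (span ℂ {u, v}) = 2 := by
  have hfin := finrank_span_pair (linearIndependent_of_polar_ne_zero hu hv huv)
  have := Module.finite_of_finrank_eq_succ hfin
  rw [← hfin, quadRankOn_eq_finrank_iff]
  intro z hz hpol
  obtain ⟨s, t, rfl⟩ := mem_span_pair.1 hz
  have hzu := hpol u (subset_span (by simp))
  have hzv := hpol v (subset_span (by simp))
  simp only [polar_add_left, polar_smul_left, polar_self, hu, hv, polar_comm q v u,
    smul_eq_mul, nsmul_eq_mul, mul_zero, add_zero, zero_add] at hzu hzv
  simp [(mul_eq_zero.1 hzv).resolve_right huv, (mul_eq_zero.1 hzu).resolve_right huv]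

theorem exists_isotropic_pair_of_quadRankOn_eq_two {L : Submodule ℂ M} (hL : finrank ℂ L = 2)
    (hr : quadRankOn q L = 2) :
    ∃ u v, L = span ℂ {u, v} ∧ q u = 0 ∧ q v = 0 ∧ polar q u v ≠ 0 := by
  have := Module.finite_of_finrank_eq_succ hL
  have hnondeg := quadRankOn_eq_finrank_iff.1 (hr.trans hL.symm)
  obtain ⟨u, huL, hu0, hu⟩ := exists_isotropic_mem (q := q) hL
  obtain ⟨w, hwL, huw⟩ : ∃ w ∈ L, polar q u w ≠ 0 := by
    by_contra! h
    exact hu0 (hnondeg u huL h)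
  -- `q (t • u + w) = t * polar q u w + q w` because `u` is isotropic
  set t := -(q w / polar q u w)
  set v := t • u + w
  have huv : polar q u v = polar q u w := by
    simp [v, polar_add_right, polar_smul_right, polar_self, hu]
  have hv : q v = 0 := by
    have h1 : q v = polar q (t • u) w + q w := by simp [v, polar, QuadraticMap.map_smul, hu]
    rw [h1, polar_smul_left, smul_eq_mul, neg_mul, div_mul_cancel₀ _ huw, neg_add_cancel]
  exact ⟨u, v, eq_span_pair_of_polar_ne_zero hL huL (L.add_mem (L.smul_mem _ huL) hwL) hu hv
    (huv ▸ huw), hu, hv, huv ▸ huw⟩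

end QuadRank

section ProductVectors

variable {M N : Type*} [AddCommGroup M] [Module ℂ M] [AddCommGroup N] [Module ℂ N]
  {q : QuadraticForm ℂ (M ⊗[ℂ] N)}

theorem exists_bases_of_quadRankOn_eq_two
    (hq : ∀ v, q v = 0 ↔ ∃ (x : M) (y : N), v = x ⊗ₜ[ℂ] y)
    (hM : finrank ℂ M = 2) (hN : finrank ℂ N = 2)
    {L : Submodule ℂ (M ⊗[ℂ] N)} (hL : finrank ℂ L = 2) (hr : quadRankOn q L = 2) :
    ∃ (bM : Basis (Fin 2) ℂ M) (bN : Basis (Fin 2) ℂ N),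
      L = span ℂ {bM 0 ⊗ₜ[ℂ] bN 0, bM 1 ⊗ₜ[ℂ] bN 1} := by
  obtain ⟨u, v, rfl, hu, hv, huv⟩ := exists_isotropic_pair_of_quadRankOn_eq_two hL hr
  obtain ⟨x, x', rfl⟩ := (hq u).1 hu
  obtain ⟨y, y', rfl⟩ := (hq v).1 hv
  have hsum : ∀ z w, x ⊗ₜ[ℂ] x' + y ⊗ₜ[ℂ] y' ≠ z ⊗ₜ w := fun z w h =>
    (polar_ne_zero_iff hu hv).1 huv ((hq _).2 ⟨z, w, h⟩)
  obtain ⟨bM, rfl, rfl⟩ := exists_basis_fin_two hM (linearIndependent_left_of_forall_ne_tmul hsum)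
  obtain ⟨bN, rfl, rfl⟩ := exists_basis_fin_two hN (linearIndependent_right_of_forall_ne_tmul hsum)
  exact ⟨bM, bN, rfl⟩

theorem linearIndependent_of_tmul_mem [FiniteDimensional ℂ N]
    (hq : ∀ v, q v = 0 ↔ ∃ (x : M) (y : N), v = x ⊗ₜ[ℂ] y)
    (bM : Basis (Fin 2) ℂ M) {L : Submodule ℂ (M ⊗[ℂ] N)} (hL : finrank ℂ L = finrank ℂ M)
    (hr : quadRankOn q L ≠ 0) {a c : N} (ha : bM 0 ⊗ₜ a ∈ L) (hc : bM 1 ⊗ₜ c ∈ L)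
    (ha0 : a ≠ 0) (hc0 : c ≠ 0) : LinearIndependent ℂ ![a, c] := by
  have := Module.Finite.of_basis bM
  refine linearIndependent_fin2.2 ⟨hc0, fun s hs => ?_⟩
  simp only [Matrix.cons_val_one, Matrix.cons_val_zero] at hs
  have hs0 : s ≠ 0 := by rintro rfl; exact ha0 (by simp [← hs])
  have htop : L.comap ((mk ℂ M N).flip c) = ⊤ := by
    rw [eq_top_iff, ← bM.span_eq, span_le, Set.range_subset_iff, Fin.forall_fin_two]
    refine ⟨?_, hc⟩
    rw [SetLike.mem_coe, mem_comap, LinearMap.flip_apply, mk_apply, ← inv_smul_smul₀ hs0 c,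
      tmul_smul, hs]
    exact L.smul_mem _ ha
  have hlt := finrank_comap_lt_of_quadRankOn_ne_zero (flip_mk_injective_of_ne_zero hc0)
    (fun x => (hq _).2 ⟨x, c, rfl⟩) hL hr
  rw [htop, finrank_top] at hlt
  exact lt_irrefl _ hlt

theorem quadRankOn_eq_two_of_tmul_mem
    (hq : ∀ v, q v = 0 ↔ ∃ (x : M) (y : N), v = x ⊗ₜ[ℂ] y)
    (bM : Basis (Fin 2) ℂ M) {L : Submodule ℂ (M ⊗[ℂ] N)}
    (hL : finrank ℂ L = 2) {a c : N} (hac : LinearIndependent ℂ ![a, c])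
    (ha : bM 0 ⊗ₜ a ∈ L) (hc : bM 1 ⊗ₜ c ∈ L) : quadRankOn q L = 2 := by
  have hu : q (bM 0 ⊗ₜ a) = 0 := (hq _).2 ⟨_, _, rfl⟩
  have hv : q (bM 1 ⊗ₜ c) = 0 := (hq _).2 ⟨_, _, rfl⟩
  have huv : polar q (bM 0 ⊗ₜ a) (bM 1 ⊗ₜ c) ≠ 0 := by
    rw [polar_ne_zero_iff hu hv, Ne, hq, not_exists]
    exact fun z => not_exists.2 (tmul_add_tmul_ne_tmul bM zero_ne_one hac z)
  rw [eq_span_pair_of_polar_ne_zero hL ha hc hu hv huv]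
  exact quadRankOn_span_pair hu hv huv

end ProductVectors

theorem le_sup_map_mk_comap_mk {L1 L2 L3 : Type*} [AddCommGroup L1] [Module ℂ L1]
    [AddCommGroup L2] [Module ℂ L2] [AddCommGroup L3] [Module ℂ L3]
    (b1 : Basis (Fin 2) ℂ L1) (b2 : Basis (Fin 2) ℂ L2) {L23 : Submodule ℂ (L2 ⊗[ℂ] L3)}
    {L123 : Submodule ℂ ((L1 ⊗[ℂ] L2) ⊗[ℂ] L3)}
    (hsub : L123 ≤ leftTensorSub (span ℂ {b1 0 ⊗ₜ[ℂ] b2 0, b1 1 ⊗ₜ[ℂ] b2 1}) ⊓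
      rightTensorSub L23) :
    L123 ≤ (L23.comap (mk ℂ L2 L3 (b2 0))).map (mk ℂ _ L3 (b1 0 ⊗ₜ b2 0)) ⊔
      (L23.comap (mk ℂ L2 L3 (b2 1))).map (mk ℂ _ L3 (b1 1 ⊗ₜ b2 1)) := by
  intro w hw
  obtain ⟨hl, t, ht, hwt⟩ := mem_inf.1 (hsub hw)
  obtain ⟨a, c, rfl⟩ := exists_eq_tmul_add_tmul_of_mem_range_mapIncl hl
  have ht' : t = b1 0 ⊗ₜ (b2 0 ⊗ₜ a) + b1 1 ⊗ₜ (b2 1 ⊗ₜ c) := by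
    simpa using (congrArg (TensorProduct.assoc ℂ L1 L2 L3) hwt)
  have hcoord (i : Fin 2) := equivFinsuppOfBasisLeft_apply_mem b1 ht i
  simp only [ht', map_add, Finsupp.add_apply, equivFinsuppOfBasisLeft_apply_tmul_apply,
    Basis.repr_self, Finsupp.single_apply] at hcoord
  exact mem_sup.2 ⟨_, mem_map_of_mem (by simpa using hcoord 0), _,
    mem_map_of_mem (by simpa using hcoord 1), rfl⟩

theorem stmt_5 {L1 L2 L3 : Type*} [AddCommGroup L1] [Module ℂ L1]
    [AddCommGroup L2] [Module ℂ L2] [AddCommGroup L3] [Module ℂ L3]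
    (h1 : Module.finrank ℂ L1 = 2) (h2 : Module.finrank ℂ L2 = 2)
    (h3 : Module.finrank ℂ L3 = 2)
    (L12 : Submodule ℂ (L1 ⊗[ℂ] L2)) (L23 : Submodule ℂ (L2 ⊗[ℂ] L3))
    (L123 : Submodule ℂ ((L1 ⊗[ℂ] L2) ⊗[ℂ] L3))
    (h12 : Module.finrank ℂ L12 = 2) (h23 : Module.finrank ℂ L23 = 2)
    (h123 : Module.finrank ℂ L123 = 2)
    (hsub : L123 ≤ leftTensorSub (L3 := L3) L12 ⊓ rightTensorSub (L1 := L1) L23)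
    (q12 : QuadraticForm ℂ (L1 ⊗[ℂ] L2))
    (hq12 : ∀ v : L1 ⊗[ℂ] L2, q12 v = 0 ↔ ∃ (x : L1) (y : L2), v = x ⊗ₜ[ℂ] y)
    (q23 : QuadraticForm ℂ (L2 ⊗[ℂ] L3))
    (hq23 : ∀ v : L2 ⊗[ℂ] L3, q23 v = 0 ↔ ∃ (x : L2) (y : L3), v = x ⊗ₜ[ℂ] y)
    (hrank12 : quadRankOn q12 L12 = 2) (hrank23 : quadRankOn q23 L23 ≠ 0) :
    quadRankOn q23 L23 = 2 ∧
    ∃ (b1 : Module.Basis (Fin 2) ℂ L1) (b2 : Module.Basis (Fin 2) ℂ L2) (b3 : Module.Basis (Fin 2) ℂ L3),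
      L123 = Submodule.span ℂ
        {(b1 0 ⊗ₜ[ℂ] b2 0) ⊗ₜ[ℂ] b3 0, (b1 1 ⊗ₜ[ℂ] b2 1) ⊗ₜ[ℂ] b3 1} := by
  have := Module.finite_of_finrank_eq_succ h2
  have := Module.finite_of_finrank_eq_succ h3
  obtain ⟨b1, b2, rfl⟩ := exists_bases_of_quadRankOn_eq_two hq12 h1 h2 h12 hrank12
  have hcomap (i : Fin 2) : finrank ℂ (L23.comap (mk ℂ L2 L3 (b2 i))) ≤ 1 := by
    have := finrank_comap_lt_of_quadRankOn_ne_zero (mk_injective_of_ne_zero (b2.ne_zero i))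
      (fun y => (hq23 _).2 ⟨_, y, rfl⟩) (h23.trans h3.symm) hrank23
    omega
  obtain ⟨a, ha, c, hc, ha0, hc0, rfl⟩ :=
    exists_eq_span_pair_of_le_sup (le_sup_map_mk_comap_mk b1 b2 hsub) h123 (hcomap 0) (hcomap 1)
  have hac := linearIndependent_of_tmul_mem hq23 b2 (h23.trans h2.symm) hrank23 ha hc ha0 hc0
  obtain ⟨b3, rfl, rfl⟩ := exists_basis_fin_two h3 hac
  exact ⟨quadRankOn_eq_two_of_tmul_mem hq23 b2 h23 hac ha hc, b1, b2, b3, rfl⟩
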